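/- The Gamma operator applied to the function ω = x̱/|x̱| on ℝ^m ∖ {0} satisfies Γ_k[ω] = (μ - 1) ω. -/

import Mathlib

open scoped BigOperators RealInnerProductSpace
open MeasureTheory

namespace CGDunkl

/-- The underlying Euclidean space `ℝ^m`. -/
abbrev V (m : ℕ) := EuclideanSpace ℝ (Fin m)

/-- The quadratic form `x ↦ -‖x‖²` on `ℝ^m`, whose Clifford algebra is `ℝ_{0,m}`
(so that `eᵢ eⱼ + eⱼ eᵢ = -2 δᵢⱼ`). -/
noncomputable def Q (m : ℕ) : QuadraticForm ℝ (V m) :=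
  - LinearMap.BilinMap.toQuadraticMap (innerₗ (V m) : LinearMap.BilinMap ℝ (V m) ℝ)

/-- A (normed) model of the Clifford algebra `ℝ_{0,m}`: an `ℝ`-algebra isomorphism from
the Clifford algebra of `-‖·‖²` on `ℝ^m` to a normed algebra `A`. -/
abbrev CliffordModel (m : ℕ) (A : Type*) [NormedRing A] [NormedAlgebra ℝ A] :=
  CliffordAlgebra (Q m) ≃ₐ[ℝ] A

variable {m : ℕ} {A : Type*} [NormedRing A] [NormedAlgebra ℝ A]

/-- The Clifford generators `e_j`. -/
noncomputable def ee (F : CliffordModel m A) (j : Fin m) : A :=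
  F (CliffordAlgebra.ι (Q m) (EuclideanSpace.single j 1))

/-- The vector variable `x̱ = Σⱼ eⱼ xⱼ`. -/
noncomputable def xv (F : CliffordModel m A) (x : V m) : A :=
  F (CliffordAlgebra.ι (Q m) x)

/-- Clifford conjugation, the anti-involution with `conj eᵢ = -eᵢ`
(the composition of grade reversion and grade involution). -/
noncomputable def cconj (F : CliffordModel m A) (a : A) : A :=
  F (CliffordAlgebra.reverse (CliffordAlgebra.involute (F.symm a)))

/-- The reflection in the hyperplane orthogonal to `α`. -/
noncomputable def reflect {m : ℕ} (α x : V m) : V m :=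
  x - ((2 * ⟪α, x⟫) / ⟪α, α⟫) • α

/-- The data of a (reduced, normalized) root system `R = R₊ ∪ (-R₊)` in `ℝ^m`
together with a nonnegative `G`-invariant multiplicity function `κ`. -/
structure DunklData (m : ℕ) where
  /-- the root system -/
  R : Finset (V m)
  /-- the positive subsystem -/
  Rplus : Finset (V m)
  /-- the multiplicity function -/
  κ : V m → ℝ
  root_ne_zero : ∀ α ∈ R, α ≠ 0
  /-- normalization `⟨α, α⟩ = 2` -/
  norm_two : ∀ α ∈ R, ⟪α, α⟫ = (2 : ℝ)
  /-- the root system is reduced -/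
  reduced : ∀ α ∈ R, ∀ c : ℝ, c • α ∈ R → c = 1 ∨ c = -1
  /-- `R` is preserved by each reflection `r_α`, `α ∈ R` -/
  stable : ∀ α ∈ R, ∀ β ∈ R, reflect α β ∈ R
  /-- `R` is the union of `R₊` and `-R₊` -/
  split : ∀ α : V m, α ∈ R ↔ (α ∈ Rplus ∨ -α ∈ Rplus)
  pos_disjoint : ∀ α ∈ Rplus, -α ∉ Rplus
  /-- the multiplicity function is invariant under the reflection group -/
  invariant : ∀ α ∈ R, ∀ β ∈ R, κ (reflect α β) = κ β
  nonneg : ∀ α ∈ R, 0 ≤ κ α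

/-- `γ = Σ_{α ∈ R₊} κ_α`. -/
noncomputable def gammaK (D : DunklData m) : ℝ := ∑ α ∈ D.Rplus, D.κ α

/-- The Dunkl dimension `μ = m + 2γ`. -/
noncomputable def mu (D : DunklData m) : ℝ := m + 2 * gammaK D

/-- The Dunkl operator `T_i`, acting on functions with values in the Clifford algebra. -/
noncomputable def T (D : DunklData m) (i : Fin m) (f : V m → A) (x : V m) : A :=
  fderiv ℝ f x (EuclideanSpace.single i 1) +
    ∑ α ∈ D.Rplus, (D.κ α * (α i) / ⟪α, x⟫) • (f x - f (reflect α x))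

/-- The Dunkl Dirac operator `D_k = Σⱼ eⱼ T_j`. -/
noncomputable def Dirac (F : CliffordModel m A) (D : DunklData m) (f : V m → A) (x : V m) : A :=
  ∑ j : Fin m, ee F j * T D j f x

/-- The Dunkl Laplacian `Δ_k = Σᵢ Tᵢ²`. -/
noncomputable def Lap (D : DunklData m) (f : V m → A) (x : V m) : A :=
  ∑ i : Fin m, T D i (T D i f) x

/-- The Euler operator `𝔼 = Σᵢ xᵢ ∂_{xᵢ}`. -/
noncomputable def Euler (f : V m → A) (x : V m) : A := fderiv ℝ f x x

/-- The angular Dunkl Dirac operator (Gamma operator) `Γ_k = D_k x̱ + μ + 𝔼`. -/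
noncomputable def Gam (F : CliffordModel m A) (D : DunklData m) (f : V m → A) (x : V m) : A :=
  Dirac F D (fun y => xv F y * f y) x + mu D • f x + Euler f x

/-- The regular set: the complement of the hyperplane arrangement, where the pointwise
formula for the Dunkl operators is valid. -/
def Reg (D : DunklData m) : Set (V m) := {x | ∀ α ∈ D.Rplus, ⟪α, x⟫ ≠ 0}

/-- Left solid inner Dunkl monogenic of order `k`: a smooth function, homogeneous (as a
polynomial) of degree `k`, with `D_k M = 0`. -/
def IsInner (F : CliffordModel m A) (D : DunklData m) (k : ℕ) (M : V m → A) : Prop :=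
  ContDiff ℝ (⊤ : ℕ∞) M ∧ (∀ (c : ℝ) (x : V m), M (c • x) = c ^ k • M x) ∧
    ∀ x ∈ Reg D, Dirac F D M x = 0

/-- Left solid outer Dunkl monogenic of order `k`: left Dunkl monogenic on `ℝ^m ∖ {0}` and
homogeneous of degree `-(k + μ - 1)`. -/
def IsOuter (F : CliffordModel m A) (D : DunklData m) (k : ℕ) (Qf : V m → A) : Prop :=
  ContDiffOn ℝ (⊤ : ℕ∞) Qf {x | x ≠ 0} ∧
    (∀ c : ℝ, 0 < c → ∀ x : V m, x ≠ 0 →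
      Qf (c • x) = ((c : ℝ) ^ (-((k : ℝ) + mu D - 1)) : ℝ) • Qf x) ∧
    ∀ x ∈ Reg D, x ≠ 0 → Dirac F D Qf x = 0

/-- The weight function `w_k(x) = Π_{α ∈ R₊} |⟨x, α⟩|^{2 κ_α}`. -/
noncomputable def w (D : DunklData m) (x : V m) : ℝ :=
  ∏ α ∈ D.Rplus, |⟪x, α⟫| ^ (2 * D.κ α)


section GamOmegaAux

lemma xv_smul' (F : CliffordModel m A) (c : ℝ) (y : V m) : xv F (c • y) = c • xv F y := by
  rw [xv, xv, _root_.map_smul, _root_.map_smul]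

lemma xv_mul_self' (F : CliffordModel m A) (y : V m) :
    xv F y * xv F y = algebraMap ℝ A (-(‖y‖ ^ 2)) := by
  rw [xv, ← map_mul, CliffordAlgebra.ι_sq_scalar]
  have hq : Q m y = -(‖y‖ ^ 2) := by
    have h2 : (innerₗ (V m) : LinearMap.BilinMap ℝ (V m) ℝ) y y = ⟪y, y⟫ := rfl
    rw [Q, QuadraticMap.neg_apply, LinearMap.BilinMap.toQuadraticMap_apply, h2,
      real_inner_self_eq_norm_sq]
  rw [hq, AlgEquiv.commutes]

lemma norm_reflect' (α x : V m) : ‖reflect α x‖ = ‖x‖ := by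
  rcases eq_or_ne α 0 with h0 | h0
  · simp [reflect, h0]
  · have hαα : ⟪α, α⟫ ≠ 0 := fun h => h0 (inner_self_eq_zero.mp h)
    have h : ‖reflect α x‖ ^ 2 = ‖x‖ ^ 2 := by
      rw [← real_inner_self_eq_norm_sq, ← real_inner_self_eq_norm_sq]
      simp only [reflect, inner_sub_left, inner_sub_right, real_inner_smul_left,
        real_inner_smul_right]
      rw [real_inner_comm α x]
      set a := ⟪α, x⟫ with ha
      set b := ⟪α, α⟫ with hb
      set c := ⟪x, x⟫ with hc
      field_simp
      ring
    calc ‖reflect α x‖ = Real.sqrt (‖reflect α x‖ ^ 2) := (Real.sqrt_sq (norm_nonneg _)).symm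
      _ = Real.sqrt (‖x‖ ^ 2) := by rw [h]
      _ = ‖x‖ := Real.sqrt_sq (norm_nonneg _)

lemma hasFDerivAt_norm' {x : V m} (hx : x ≠ 0) :
    HasFDerivAt (fun y : V m => ‖y‖) (‖x‖⁻¹ • innerSL ℝ x) x := by
  have h1 : HasFDerivAt (fun y : V m => ‖y‖ ^ 2) ((2:ℕ) • innerSL ℝ x) x :=
    (hasStrictFDerivAt_norm_sq x).hasFDerivAt
  have hn : ‖x‖ ≠ 0 := norm_ne_zero_iff.mpr hx
  have hne : ‖x‖ ^ 2 ≠ 0 := pow_ne_zero _ hn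
  have h2 := (Real.hasDerivAt_sqrt hne).comp_hasFDerivAt x h1
  have heq : (fun y : V m => Real.sqrt (‖y‖ ^ 2)) = fun y : V m => ‖y‖ := by
    funext y; exact Real.sqrt_sq (norm_nonneg y)
  simp only [Function.comp_def] at h2
  rw [heq] at h2
  refine h2.congr_fderiv ?_
  rw [Real.sqrt_sq (norm_nonneg x)]
  ext v
  simp only [ContinuousLinearMap.smul_apply, ContinuousLinearMap.coe_smul', Pi.smul_apply,
    smul_eq_mul, nsmul_eq_mul, Nat.cast_ofNat]
  field_simp

lemma hasFDerivAt_negnorm_alg {x : V m} (hx : x ≠ 0) :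
    HasFDerivAt (fun y : V m => algebraMap ℝ A (-‖y‖))
      ((algebraMapCLM ℝ A).comp (-(‖x‖⁻¹ • innerSL ℝ x))) x :=
  (algebraMapCLM ℝ A).hasFDerivAt.comp x (hasFDerivAt_norm' hx).neg

lemma xv_eq_sum' (F : CliffordModel m A) (x : V m) : xv F x = ∑ j, x j • ee F j := by
  have hx : x = ∑ j, x j • EuclideanSpace.single j (1:ℝ) := by
    have := (EuclideanSpace.basisFun (Fin m) ℝ).sum_repr x
    simp only [EuclideanSpace.basisFun_apply, EuclideanSpace.basisFun_repr] at this
    exact this.symm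
  unfold xv ee
  conv_lhs => rw [hx]
  rw [map_sum, map_sum]
  refine Finset.sum_congr rfl fun j _ => ?_
  rw [_root_.map_smul, _root_.map_smul]

lemma T_negnorm (D : DunklData m) (j : Fin m) (x : V m) (hx : x ≠ 0) :
    T D j (fun y : V m => algebraMap ℝ A (-‖y‖)) x = (-(‖x‖⁻¹ * x j)) • (1 : A) := by
  unfold T
  rw [(hasFDerivAt_negnorm_alg (A := A) hx).fderiv]
  have hzero : ∀ α ∈ D.Rplus,
      (D.κ α * α j / ⟪α, x⟫) • ((fun y : V m => algebraMap ℝ A (-‖y‖)) x -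
        (fun y : V m => algebraMap ℝ A (-‖y‖)) (reflect α x)) = 0 := by
    intro α _
    simp [norm_reflect']
  rw [Finset.sum_congr rfl hzero, Finset.sum_const_zero, add_zero]
  simp only [ContinuousLinearMap.coe_comp', Function.comp_apply,
    ContinuousLinearMap.neg_apply, ContinuousLinearMap.smul_apply, innerSL_apply_apply,
    smul_eq_mul, algebraMapCLM_apply]
  have hi : ⟪x, EuclideanSpace.single j (1:ℝ)⟫ = x j := by
    rw [EuclideanSpace.inner_single_right]; simp
  rw [hi, Algebra.algebraMap_eq_smul_one]

lemma euler_omega' (F : CliffordModel m A) (x : V m) (hx : x ≠ 0) :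
    Euler (fun y : V m => ‖y‖⁻¹ • xv F y) x = 0 := by
  classical
  have hn : ‖x‖ ≠ 0 := norm_ne_zero_iff.mpr hx
  set L : V m →L[ℝ] A := LinearMap.toContinuousLinearMap
    ((F.toLinearMap).comp (CliffordAlgebra.ι (Q m))) with hL
  have hLapp : ∀ y : V m, L y = xv F y := fun y => rfl
  have hLder : HasFDerivAt (fun y : V m => xv F y) L x := by
    have := L.hasFDerivAt (x := x)
    exact this
  have hinv : HasFDerivAt (fun y : V m => ‖y‖⁻¹)
      ((-(‖x‖ ^ 2)⁻¹) • (‖x‖⁻¹ • innerSL ℝ x)) x := by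
    have h := (hasDerivAt_inv hn).comp_hasFDerivAt x (hasFDerivAt_norm' hx)
    exact h
  have hmain := hinv.smul hLder
  unfold Euler
  rw [show (fun y : V m => ‖y‖⁻¹ • xv F y) = ((fun y : V m => ‖y‖⁻¹) • fun y => xv F y) from rfl,
    hmain.fderiv]
  simp only [ContinuousLinearMap.add_apply, ContinuousLinearMap.smul_apply,
    ContinuousLinearMap.smulRight_apply, innerSL_apply_apply, smul_eq_mul]
  rw [hLapp, real_inner_self_eq_norm_sq]
  have hc : -(‖x‖ ^ 2)⁻¹ * (‖x‖⁻¹ * ‖x‖ ^ 2) = -(‖x‖⁻¹) := by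
    field_simp
  rw [hc]
  module

lemma g_eq (F : CliffordModel m A) :
    (fun y : V m => xv F y * xv F (‖y‖⁻¹ • y)) = fun y : V m => algebraMap ℝ A (-‖y‖) := by
  funext y
  rw [xv_smul', mul_smul_comm, xv_mul_self', Algebra.algebraMap_eq_smul_one,
    Algebra.algebraMap_eq_smul_one, smul_smul]
  congr 1
  rcases eq_or_ne ‖y‖ 0 with h | h
  · simp [h]
  · field_simp

end GamOmegaAux

/-- The Gamma operator applied to `ω = x̱/|x̱|` satisfies
`Γ_k[ω] = (μ - 1) ω`. -/
theorem gam_omega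
    {m : ℕ} {A : Type*} [NormedRing A] [NormedAlgebra ℝ A]
    (F : CliffordModel m A) (D : DunklData m) :
    ∀ x ∈ Reg D, x ≠ 0 →
      Gam F D (fun y => xv F (‖y‖⁻¹ • y)) x = (mu D - 1) • xv F (‖x‖⁻¹ • x) := by
  intro x _hreg hx
  have hn : ‖x‖ ≠ 0 := norm_ne_zero_iff.mpr hx
  unfold Gam
  -- Dirac term
  have hDirac : Dirac F D (fun y => xv F y * xv F (‖y‖⁻¹ • y)) x
      = (-(‖x‖⁻¹)) • xv F x := by
    rw [g_eq F]
    unfold Dirac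
    have hT : ∀ j : Fin m, T D j (fun y : V m => algebraMap ℝ A (-‖y‖)) x
        = (-(‖x‖⁻¹ * x j)) • (1 : A) := fun j => T_negnorm D j x hx
    calc ∑ j : Fin m, ee F j * T D j (fun y : V m => algebraMap ℝ A (-‖y‖)) x
        = ∑ j : Fin m, (-(‖x‖⁻¹)) • (x j • ee F j) := by
          refine Finset.sum_congr rfl fun j _ => ?_
          rw [hT j, mul_smul_comm, mul_one, smul_smul]
          ring_nf
      _ = (-(‖x‖⁻¹)) • ∑ j : Fin m, x j • ee F j := by rw [Finset.smul_sum]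
      _ = (-(‖x‖⁻¹)) • xv F x := by rw [← xv_eq_sum']
  rw [hDirac]
  -- Euler term
  have homega : (fun y : V m => xv F (‖y‖⁻¹ • y)) = fun y : V m => ‖y‖⁻¹ • xv F y := by
    funext y; exact xv_smul' F _ y
  rw [homega, euler_omega' F x hx, add_zero]
  rw [xv_smul']
  rw [smul_smul, smul_smul]
  rw [← add_smul]
  congr 1
  ring

end CGDunkl
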